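/- If (A, ⋆) is an alternative superalgebra and R: A → A is a super Rota-Baxter operator of weight 0 (R(x)⋆R(y) = R(R(x)⋆y + x⋆R(y))), then x ≺ y = x ⋆ R(y) and x ≻ y = R(x) ⋆ y define a pre-alternative superalgebra structure on A. -/
import Mathlib


open scoped TensorProduct

/-- The super sign `(-1)^{ij}` for parities `i j : ZMod 2`. -/
def sgn (K : Type*) [Field K] (i j : ZMod 2) : K := (-1 : K) ^ (i * j).val

/-- `(A, mul)` with grading `G` is an alternative superalgebra. -/
def IsAltSuper {K A : Type*} [Field K] [AddCommGroup A] [Module K A]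
    (G : ZMod 2 → Submodule K A) (mul : A →ₗ[K] A →ₗ[K] A) : Prop :=
  (∀ i j, ∀ x ∈ G i, ∀ y ∈ G j, mul x y ∈ G (i + j)) ∧
  (∀ i j k, ∀ x ∈ G i, ∀ y ∈ G j, ∀ z ∈ G k,
    (mul (mul x y) z - mul x (mul y z))
      + sgn K i j • (mul (mul y x) z - mul y (mul x z)) = 0) ∧
  (∀ i j k, ∀ x ∈ G i, ∀ y ∈ G j, ∀ z ∈ G k,
    (mul (mul x y) z - mul x (mul y z))
      + sgn K j k • (mul (mul x z) y - mul x (mul z y)) = 0)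

/-- `(A, pc, ps)` (with `pc = ≺`, `ps = ≻`) is a pre-alternative superalgebra. -/
def IsPreAlt {K A : Type*} [Field K] [AddCommGroup A] [Module K A]
    (G : ZMod 2 → Submodule K A) (pc ps : A →ₗ[K] A →ₗ[K] A) : Prop :=
  (∀ i j, ∀ x ∈ G i, ∀ y ∈ G j, pc x y ∈ G (i + j)) ∧
  (∀ i j, ∀ x ∈ G i, ∀ y ∈ G j, ps x y ∈ G (i + j)) ∧
  (∀ i j k, ∀ x ∈ G i, ∀ y ∈ G j, ∀ z ∈ G k,
    ps ((pc + ps) x y) z - ps x (ps y z)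
      + sgn K i j • (ps ((pc + ps) y x) z - ps y (ps x z)) = 0) ∧
  (∀ i j k, ∀ x ∈ G i, ∀ y ∈ G j, ∀ z ∈ G k,
    pc (pc x y) z - pc x ((pc + ps) y z)
      + sgn K j k • (pc (pc x z) y - pc x ((pc + ps) z y)) = 0) ∧
  (∀ i j k, ∀ x ∈ G i, ∀ y ∈ G j, ∀ z ∈ G k,
    pc (ps x y) z - ps x (pc y z)
      + sgn K i j • (pc (pc y x) z - pc y ((pc + ps) x z)) = 0) ∧
  (∀ i j k, ∀ x ∈ G i, ∀ y ∈ G j, ∀ z ∈ G k,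
    pc (ps x y) z - ps x (pc y z)
      + sgn K j k • (ps ((pc + ps) x z) y - ps x (ps z y)) = 0)

/-- a super Rota-Baxter operator of weight 0 on an alternative
superalgebra induces a pre-alternative superalgebra structure
`x ≺ y = x ⋆ R y`, `x ≻ y = R x ⋆ y`. -/
theorem stmt15 {K A : Type*} [Field K] [AddCommGroup A] [Module K A]
    (G : ZMod 2 → Submodule K A) (mul : A →ₗ[K] A →ₗ[K] A)
    (halt : IsAltSuper G mul)
    (R : A →ₗ[K] A) (hReven : ∀ i, ∀ x ∈ G i, R x ∈ G i)
    (hRB : ∀ x y : A, mul (R x) (R y) = R (mul (R x) y + mul x (R y)))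
    (pc ps : A →ₗ[K] A →ₗ[K] A)
    (hpc : ∀ x y : A, pc x y = mul x (R y))
    (hps : ∀ x y : A, ps x y = mul (R x) y) :
    IsPreAlt G pc ps := by
  obtain ⟨hclo, hL, hR⟩ := halt
  have key : ∀ x y : A, R ((pc + ps) x y) = mul (R x) (R y) := by
    intro x y
    simp only [LinearMap.add_apply, hpc x y, hps x y]
    rw [add_comm, ← hRB]
  refine ⟨?_, ?_, ?_, ?_, ?_, ?_⟩
  · intro i j x hx y hy
    rw [hpc]; exact hclo i j x hx (R y) (hReven j y hy)
  · intro i j x hx y hy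
    rw [hps]; exact hclo i j (R x) (hReven i x hx) y hy
  · intro i j k x hx y hy z hz
    simp only [hps]
    rw [key x y, key y x]
    exact hL i j k (R x) (hReven i x hx) (R y) (hReven j y hy) z hz
  · intro i j k x hx y hy z hz
    simp only [hpc]
    rw [key y z, key z y]
    exact hR i j k x hx (R y) (hReven j y hy) (R z) (hReven k z hz)
  · intro i j k x hx y hy z hz
    simp only [hpc, hps]
    rw [key x z]
    exact hL i j k (R x) (hReven i x hx) y hy (R z) (hReven k z hz)
  · intro i j k x hx y hy z hz
    simp only [hpc, hps]
    rw [key x z]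
    exact hR i j k (R x) (hReven i x hx) y hy (R z) (hReven k z hz)
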